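/- arXiv:2102.06548 — 5 statements merged into one kernel-verified Lean document; each statement's English description precedes it below -/
import Mathlib

section
/- Let P be a row-stochastic matrix indexed by state-action pairs and γ ∈ (0,1). Let V* and Q* satisfy the Bellman relation Q* = r + γ P V* with 0 ≤ r ≤ 1 and 0 ≤ Q* ≤ 1/(1-γ) entrywise, and define Var_P(V*) = P(V* ∘ V*) - (PV*) ∘ (PV*). Then for any row-stochastic matrix M, Var_P(V*) ≤ (1/γ)(γ M (Q* ∘ Q*) - Q* ∘ Q*) + (2/γ²) Q* ∘ r + (4/(1-γ)) δ · 1 entrywise, whenever M(Q*∘Q*) and P^{π*}(Q*∘Q*) differ by at most (4/(1-γ)) δ in sup norm, where P^{π*} is the transition matrix under the optimal policy and δ ≥ 0. -/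
/-!
Under the optimal policy `P (V* ∘ V*) = P^{π*} (Q* ∘ Q*)`, which is within `4δ/(1-γ)` of
`M (Q* ∘ Q*)`, while the Bellman relation gives `P V* = (Q* - r)/γ`. The claim then reduces
to the scalar inequality `Q²/γ - 2Qr/γ² ≤ ((Q - r)/γ)²`, i.e. `0 ≤ (1 - γ) Q² + r²`.
-/

open Finset

theorem sum_policyKernel_mul {ι S A : Type*} [Fintype S] [Fintype A] [DecidableEq A]
    (P : ι → S → ℝ) (π : S → A) (Pπ : ι → S × A → ℝ)
    (hPπ : ∀ i s' a', Pπ i (s', a') = P i s' * (if a' = π s' then 1 else 0))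
    (f : S × A → ℝ) (i : ι) :
    ∑ sa', Pπ i sa' * f sa' = ∑ s', P i s' * f (s', π s') := by
  rw [Fintype.sum_prod_type]
  refine sum_congr rfl fun s' _ => ?_
  simp only [hPπ, mul_ite, mul_one, mul_zero, ite_mul, zero_mul, sum_ite_eq', mem_univ,
    if_true]

theorem sq_div_sub_le_sq_of_eq_add_mul {γ q r x : ℝ} (hγ0 : 0 < γ) (hγ1 : γ ≤ 1)
    (h : q = r + γ * x) :
    q ^ 2 / γ - 2 / γ ^ 2 * (q * r) ≤ x ^ 2 := by
  have hx : x = (q - r) / γ := by field_simp; linarith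
  have hγ2 : 0 < γ ^ 2 := by positivity
  rw [hx, div_pow, ← sub_nonneg]
  have key : (q - r) ^ 2 / γ ^ 2 - (q ^ 2 / γ - 2 / γ ^ 2 * (q * r))
      = ((1 - γ) * q ^ 2 + r ^ 2) / γ ^ 2 := by
    field_simp; ring
  rw [key]
  have : 0 ≤ 1 - γ := by linarith
  positivity

theorem stmt5_general {S A : Type*} [Fintype S] [Fintype A] [DecidableEq A]
    (γ : ℝ) (hγ : 0 < γ ∧ γ < 1) (δ : ℝ)
    (P : S × A → S → ℝ)
    (M : S × A → S × A → ℝ)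
    (r Qstar : S × A → ℝ) (Vstar : S → ℝ)
    (hBellman : ∀ sa, Qstar sa = r sa + γ * ∑ s', P sa s' * Vstar s')
    (π : S → A) (hπ : ∀ s, Qstar (s, π s) = Vstar s)
    (Pπ : S × A → S × A → ℝ)
    (hPπ : ∀ sa s' a', Pπ sa (s', a') = P sa s' * (if a' = π s' then 1 else 0))
    (hclose : ∀ sa, |(∑ sa', M sa sa' * (Qstar sa') ^ 2)
        - ∑ sa', Pπ sa sa' * (Qstar sa') ^ 2| ≤ 4 / (1 - γ) * δ) :
    ∀ sa, ∑ s', P sa s' * (Vstar s') ^ 2 - (∑ s', P sa s' * Vstar s') ^ 2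
      ≤ (1 / γ) * (γ * ∑ sa', M sa sa' * (Qstar sa') ^ 2 - (Qstar sa) ^ 2)
        + (2 / γ ^ 2) * (Qstar sa * r sa) + (4 / (1 - γ)) * δ := by
  obtain ⟨hγ0, hγ1⟩ := hγ
  intro sa
  have hPV2 : ∑ s', P sa s' * (Vstar s') ^ 2 = ∑ sa', Pπ sa sa' * (Qstar sa') ^ 2 := by
    simp only [sum_policyKernel_mul P π Pπ hPπ, hπ]
  have hclose' := (abs_le.mp (hclose sa)).1
  have hscalar := sq_div_sub_le_sq_of_eq_add_mul hγ0 hγ1.le (hBellman sa)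
  have hexpand : (1 / γ) * (γ * ∑ sa', M sa sa' * (Qstar sa') ^ 2 - (Qstar sa) ^ 2)
      = ∑ sa', M sa sa' * (Qstar sa') ^ 2 - Qstar sa ^ 2 / γ := by
    field_simp
  rw [hPV2, hexpand]
  linarith

theorem stmt5 {S A : Type*} [Fintype S] [Fintype A] [Nonempty A] [DecidableEq A]
    (γ : ℝ) (hγ : 0 < γ ∧ γ < 1) (δ : ℝ) (hδ : 0 ≤ δ)
    (P : S × A → S → ℝ) (hP : ∀ sa, (∀ s', 0 ≤ P sa s') ∧ ∑ s', P sa s' = 1)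
    (M : S × A → S × A → ℝ) (hM : ∀ sa, (∀ sa', 0 ≤ M sa sa') ∧ ∑ sa', M sa sa' = 1)
    (r Qstar : S × A → ℝ) (Vstar : S → ℝ)
    (hr : ∀ sa, 0 ≤ r sa ∧ r sa ≤ 1)
    (hQ : ∀ sa, 0 ≤ Qstar sa ∧ Qstar sa ≤ 1 / (1 - γ))
    (hVs : ∀ s, Vstar s = ⨆ a, Qstar (s, a))
    (hBellman : ∀ sa, Qstar sa = r sa + γ * ∑ s', P sa s' * Vstar s')
    (π : S → A) (hπ : ∀ s, Qstar (s, π s) = Vstar s)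
    (Pπ : S × A → S × A → ℝ)
    (hPπ : ∀ sa s' a', Pπ sa (s', a') = P sa s' * (if a' = π s' then 1 else 0))
    (hclose : ∀ sa, |(∑ sa', M sa sa' * (Qstar sa') ^ 2)
        - ∑ sa', Pπ sa sa' * (Qstar sa') ^ 2| ≤ 4 / (1 - γ) * δ) :
    ∀ sa, ∑ s', P sa s' * (Vstar s') ^ 2 - (∑ s', P sa s' * Vstar s') ^ 2
      ≤ (1 / γ) * (γ * ∑ sa', M sa sa' * (Qstar sa') ^ 2 - (Qstar sa) ^ 2)
        + (2 / γ ^ 2) * (Qstar sa * r sa) + (4 / (1 - γ)) * δ :=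
  stmt5_general γ hγ δ P M r Qstar Vstar hBellman π hπ Pπ hPπ hclose
end

section
/- Let {u_k}_{k≥0} be a nonnegative sequence satisfying u_0 ≤ 1/(1-γ) for some γ ∈ (0,1), and u_k ≤ C√(α(1+u_{k-1})) for all k ≥ 1, where α > 0, C > 0 are constants with 2C²α ≤ 1. Then for all k ≥ 1, u_k ≤ √(2C²α) + (2C²α)^{1-1/2^k} (1/(1-γ))^{1/2^k}. -/
theorem stmt9 (γ α C : ℝ) (hγ : 0 < γ ∧ γ < 1) (hα : 0 < α) (hC : 0 < C)
    (hsmall : 2 * C ^ 2 * α ≤ 1)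
    (u : ℕ → ℝ) (hnonneg : ∀ k, 0 ≤ u k) (h0 : u 0 ≤ 1 / (1 - γ))
    (hrec : ∀ k, 1 ≤ k → u k ≤ C * Real.sqrt (α * (1 + u (k - 1)))) :
    ∀ k, 1 ≤ k → u k ≤ Real.sqrt (2 * C ^ 2 * α)
      + (2 * C ^ 2 * α) ^ ((1 : ℝ) - 1 / 2 ^ k)
        * (1 / (1 - γ)) ^ ((1 : ℝ) / 2 ^ k) := by
  obtain ⟨hγ0, hγ1⟩ := hγ
  set A : ℝ := 2 * C ^ 2 * α with hAdef
  set B : ℝ := 1 / (1 - γ) with hBdef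
  have hA0 : 0 < A := by positivity
  have hA1 : A ≤ 1 := hsmall
  have h1γ : 0 < 1 - γ := by linarith
  have hB1 : 1 ≤ B := by
    rw [hBdef, le_div_iff₀ h1γ]; linarith
  have hB0 : 0 < B := lt_of_lt_of_le one_pos hB1
  have hsA : Real.sqrt A ≤ 1 := by
    calc Real.sqrt A ≤ Real.sqrt 1 := Real.sqrt_le_sqrt hA1
    _ = 1 := Real.sqrt_one
  -- the step lemma
  have step : ∀ k : ℕ,
      1 + u k ≤ 2 + A ^ ((1:ℝ) - 1 / 2 ^ k) * B ^ ((1:ℝ) / 2 ^ k) →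
      u (k + 1) ≤ Real.sqrt A
        + A ^ ((1:ℝ) - 1 / 2 ^ (k + 1)) * B ^ ((1:ℝ) / 2 ^ (k + 1)) := by
    intro k hk
    set X : ℝ := A ^ ((1:ℝ) - 1 / 2 ^ k) * B ^ ((1:ℝ) / 2 ^ k) with hXdef
    have hX0 : 0 ≤ X := by positivity
    have h1 : u (k + 1) ≤ C * Real.sqrt (α * (1 + u k)) := by
      have := hrec (k + 1) (by omega)
      simpa using this
    have h2 : C * Real.sqrt (α * (1 + u k)) = Real.sqrt (A / 2 * (1 + u k)) := by
      rw [← Real.sqrt_sq hC.le, ← Real.sqrt_mul (by positivity)]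
      congr 1
      rw [hAdef]; ring
    have h3 : Real.sqrt (A / 2 * (1 + u k)) ≤ Real.sqrt (A + A * X) := by
      apply Real.sqrt_le_sqrt
      nlinarith [hnonneg k]
    have e1 : A * X = A ^ ((2:ℝ) - 1 / 2 ^ k) * B ^ ((1:ℝ) / 2 ^ k) := by
      rw [hXdef, show (2:ℝ) - 1 / 2 ^ k = 1 + (1 - 1 / 2 ^ k) by ring,
        Real.rpow_add hA0, Real.rpow_one, mul_assoc, hAdef]
      ring
    have e2 : Real.sqrt (A * X)
        = A ^ ((1:ℝ) - 1 / 2 ^ (k + 1)) * B ^ ((1:ℝ) / 2 ^ (k + 1)) := by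
      rw [e1, Real.sqrt_eq_rpow, Real.mul_rpow (by positivity) (by positivity),
        ← Real.rpow_mul hA0.le, ← Real.rpow_mul hB0.le]
      congr 1
      · congr 1
        rw [pow_succ]; ring
      · congr 1
        rw [pow_succ]; ring
    have h5 : Real.sqrt (A + A * X) ≤ Real.sqrt A + Real.sqrt (A * X) := by
      rw [Real.sqrt_le_iff]
      constructor
      · positivity
      · nlinarith [Real.sq_sqrt hA0.le, Real.sq_sqrt (mul_nonneg hA0.le hX0),
          Real.sqrt_nonneg A, Real.sqrt_nonneg (A * X)]
    calc u (k + 1) ≤ C * Real.sqrt (α * (1 + u k)) := h1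
      _ = Real.sqrt (A / 2 * (1 + u k)) := h2
      _ ≤ Real.sqrt (A + A * X) := h3
      _ ≤ Real.sqrt A + Real.sqrt (A * X) := h5
      _ = Real.sqrt A + A ^ ((1:ℝ) - 1 / 2 ^ (k + 1)) * B ^ ((1:ℝ) / 2 ^ (k + 1)) := by
          rw [e2]
  -- base invariant
  have base : 1 + u 0 ≤ 2 + A ^ ((1:ℝ) - 1 / 2 ^ 0) * B ^ ((1:ℝ) / 2 ^ 0) := by
    norm_num [Real.rpow_zero, Real.rpow_one]
    linarith
  have aux : ∀ k : ℕ, u (k + 1) ≤ Real.sqrt A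
      + A ^ ((1:ℝ) - 1 / 2 ^ (k + 1)) * B ^ ((1:ℝ) / 2 ^ (k + 1)) := by
    intro k
    induction k with
    | zero => exact step 0 base
    | succ k ih =>
      apply step (k + 1)
      have hX0 : 0 ≤ A ^ ((1:ℝ) - 1 / 2 ^ (k + 1)) * B ^ ((1:ℝ) / 2 ^ (k + 1)) := by
        positivity
      linarith
  intro k hk
  obtain ⟨j, rfl⟩ : ∃ j, k = j + 1 := ⟨k - 1, by omega⟩
  exact aux j
end

section
/- Let P be a row-stochastic matrix, γ ∈ (0,1), r a vector with 0 ≤ r ≤ 1 entrywise, and V* = (I - γP)^{-1} r. Define Var_P(V*) = P(V* ∘ V*) - (PV*) ∘ (PV*). Then (I - γP)^{-1} Var_P(V*) ≤ (2/(γ²(1-γ)²)) · 1 entrywise. -/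
/-!
Write `A = (1 - γ • P)⁻¹`. By the minimum principle for the stochastic matrix `P`, `A` maps
nonnegative vectors to nonnegative vectors, and `A 1 = (1 - γ)⁻¹ • 1`; hence
`0 ≤ V ≤ (1 - γ)⁻¹` and `A V ≤ (1 - γ)⁻²`. The Bellman equation `γ • P V = V - r` gives
`γ² Var_P(V) = γ² P V² - (V - r)² ≤ γ P V² - V² + 2 V = 2 V - (1 - γ • P) V²`, and applying `A`
yields `γ² A Var_P(V) ≤ 2 A V - V² ≤ 2 (1 - γ)⁻²`.
-/

namespace Matrix

variable {n : Type*} [Fintype n] [DecidableEq n] {P : Matrix n n ℝ} {γ : ℝ}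

theorem one_sub_smul_mulVec (P : Matrix n n ℝ) (γ : ℝ) (x : n → ℝ) :
    (1 - γ • P) *ᵥ x = x - γ • (P *ᵥ x) := by
  rw [sub_mulVec, one_mulVec, smul_mulVec]

/-- Minimum principle: at a minimum `i` of `x`, `x i ≤ (P *ᵥ x) i`, so
`0 ≤ x i - γ * (P *ᵥ x) i ≤ (1 - γ) * x i`. -/
theorem nonneg_of_one_sub_smul_mulVec_nonneg (hP : P ∈ rowStochastic ℝ n) (hγ0 : 0 ≤ γ)
    (hγ1 : γ < 1) {x : n → ℝ} (hx : 0 ≤ (1 - γ • P) *ᵥ x) : 0 ≤ x := by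
  by_contra hneg
  obtain ⟨i₀, hi₀⟩ : ∃ i, x i < 0 := by simpa [Pi.le_def] using hneg
  have : Nonempty n := ⟨i₀⟩
  obtain ⟨i, hmin⟩ := Finite.exists_min x
  have havg : x i ≤ (P *ᵥ x) i := by
    calc x i = (P *ᵥ (x i • 1)) i := by simp [mulVec_smul, hP.2]
      _ ≤ (P *ᵥ x) i := by
        have := nonneg_mulVec_of_mem_rowStochastic hP (x := x - x i • 1)
          (fun k => by simpa using hmin k) i
        rwa [mulVec_sub, Pi.sub_apply, sub_nonneg] at this
  have := hx i
  simp only [one_sub_smul_mulVec, Pi.sub_apply, Pi.smul_apply, smul_eq_mul, Pi.zero_apply] at this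
  nlinarith [hmin i₀]

theorem isUnit_det_one_sub_smul (hP : P ∈ rowStochastic ℝ n) (hγ0 : 0 ≤ γ) (hγ1 : γ < 1) :
    IsUnit (1 - γ • P).det := by
  rw [← isUnit_iff_isUnit_det, ← mulVec_injective_iff_isUnit]
  intro x y hxy
  have hnonneg : ∀ {u v : n → ℝ}, (1 - γ • P) *ᵥ u = (1 - γ • P) *ᵥ v → 0 ≤ u - v :=
    fun huv => nonneg_of_one_sub_smul_mulVec_nonneg hP hγ0 hγ1 (by rw [mulVec_sub, huv, sub_self])
  exact le_antisymm (sub_nonneg.mp (hnonneg hxy.symm)) (sub_nonneg.mp (hnonneg hxy))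

theorem inv_one_sub_smul_mulVec_nonneg (hP : P ∈ rowStochastic ℝ n) (hγ0 : 0 ≤ γ)
    (hγ1 : γ < 1) {y : n → ℝ} (hy : 0 ≤ y) : 0 ≤ (1 - γ • P)⁻¹ *ᵥ y := by
  refine nonneg_of_one_sub_smul_mulVec_nonneg hP hγ0 hγ1 ?_
  rwa [mulVec_mulVec, mul_nonsing_inv _ (isUnit_det_one_sub_smul hP hγ0 hγ1), one_mulVec]

theorem monotone_inv_one_sub_smul_mulVec (hP : P ∈ rowStochastic ℝ n) (hγ0 : 0 ≤ γ)
    (hγ1 : γ < 1) : Monotone ((1 - γ • P)⁻¹ *ᵥ ·) := fun y z hyz => by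
  have := inv_one_sub_smul_mulVec_nonneg hP hγ0 hγ1 (sub_nonneg.mpr hyz)
  rwa [mulVec_sub, sub_nonneg] at this

theorem inv_one_sub_smul_mulVec_one (hP : P ∈ rowStochastic ℝ n) (hγ0 : 0 ≤ γ)
    (hγ1 : γ < 1) : (1 - γ • P)⁻¹ *ᵥ 1 = (1 - γ)⁻¹ • (1 : n → ℝ) := by
  have h : (1 - γ • P) *ᵥ ((1 - γ)⁻¹ • 1) = (1 : n → ℝ) := by
    rw [mulVec_smul, one_sub_smul_mulVec, hP.2]
    ext i
    simp only [Pi.smul_apply, Pi.sub_apply, Pi.one_apply, smul_eq_mul, mul_one]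
    exact inv_mul_cancel₀ (by linarith)
  conv_lhs => rw [← h]
  rw [mulVec_mulVec, nonsing_inv_mul _ (isUnit_det_one_sub_smul hP hγ0 hγ1), one_mulVec]

theorem sq_smul_inv_one_sub_smul_mulVec_variance_le (hP : P ∈ rowStochastic ℝ n) (hγ0 : 0 ≤ γ)
    (hγ1 : γ < 1) {r V : n → ℝ} (hr0 : 0 ≤ r) (hr1 : r ≤ 1) (hV : (1 - γ • P) *ᵥ V = r) :
    γ ^ 2 • ((1 - γ • P)⁻¹ *ᵥ (P *ᵥ V ^ 2 - (P *ᵥ V) ^ 2)) ≤ (2 / (1 - γ) ^ 2) • 1 := by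
  set A := (1 - γ • P)⁻¹
  have hA_mono := monotone_inv_one_sub_smul_mulVec hP hγ0 hγ1
  have hAM : A * (1 - γ • P) = 1 := nonsing_inv_mul _ (isUnit_det_one_sub_smul hP hγ0 hγ1)
  have hA_one := inv_one_sub_smul_mulVec_one hP hγ0 hγ1
  have hV_eq : A *ᵥ r = V := by rw [← hV, mulVec_mulVec, hAM, one_mulVec]
  have hV_nonneg : 0 ≤ V := hV_eq ▸ inv_one_sub_smul_mulVec_nonneg hP hγ0 hγ1 hr0
  have hV_le : V ≤ (1 - γ)⁻¹ • 1 := hV_eq ▸ hA_one ▸ hA_mono hr1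
  have hAV_le : A *ᵥ V ≤ ((1 - γ) ^ 2)⁻¹ • 1 := by
    simpa [mulVec_smul, hA_one, smul_smul, sq] using hA_mono hV_le
  have hpointwise : γ ^ 2 • (P *ᵥ V ^ 2 - (P *ᵥ V) ^ 2) ≤ (2 : ℝ) • V - (1 - γ • P) *ᵥ V ^ 2 := by
    intro j
    have hbellman := congrFun hV j
    have hPV2 := nonneg_mulVec_of_mem_rowStochastic hP (x := V ^ 2) (fun k => sq_nonneg (V k)) j
    simp only [one_sub_smul_mulVec, Pi.sub_apply, Pi.smul_apply, Pi.pow_apply,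
      smul_eq_mul] at hbellman hPV2 ⊢
    have hγ_sq : γ ^ 2 ≤ γ := by nlinarith
    have hsq : (γ * (P *ᵥ V) j) ^ 2 = (V j - r j) ^ 2 := by rw [← hbellman]; ring
    have hrj : r j ≤ 1 := hr1 j
    nlinarith [mul_le_mul_of_nonneg_right hγ_sq hPV2,
      mul_nonneg (hV_nonneg j) (sub_nonneg.mpr hrj), sq_nonneg (r j)]
  calc γ ^ 2 • (A *ᵥ (P *ᵥ V ^ 2 - (P *ᵥ V) ^ 2))
      = A *ᵥ (γ ^ 2 • (P *ᵥ V ^ 2 - (P *ᵥ V) ^ 2)) := (mulVec_smul _ _ _).symm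
    _ ≤ A *ᵥ ((2 : ℝ) • V - (1 - γ • P) *ᵥ V ^ 2) := hA_mono hpointwise
    _ = (2 : ℝ) • (A *ᵥ V) - V ^ 2 := by
      rw [mulVec_sub, mulVec_smul, mulVec_mulVec, hAM, one_mulVec]
    _ ≤ (2 : ℝ) • (A *ᵥ V) := sub_le_self _ (fun k => sq_nonneg (V k))
    _ ≤ (2 / (1 - γ) ^ 2) • 1 := by
      rw [div_eq_mul_inv, ← smul_smul]
      exact smul_le_smul_of_nonneg_left hAV_le zero_le_two

end Matrix

open Matrix

theorem stmt13_general {n : Type*} [Fintype n] [DecidableEq n]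
    (γ : ℝ) (hγ : 0 < γ ∧ γ < 1)
    (P : Matrix n n ℝ) (hP : (∀ i j, 0 ≤ P i j) ∧ ∀ i, ∑ j, P i j = 1)
    (r : n → ℝ) (hr : ∀ i, 0 ≤ r i ∧ r i ≤ 1)
    (Vstar : n → ℝ) (hV : Vstar = ((1 : Matrix n n ℝ) - γ • P)⁻¹ *ᵥ r) :
    ∀ i, (((1 : Matrix n n ℝ) - γ • P)⁻¹ *ᵥ
        (fun j => ∑ s, P j s * (Vstar s) ^ 2 - (∑ s, P j s * Vstar s) ^ 2)) i
      ≤ 2 / (γ ^ 2 * (1 - γ) ^ 2) := by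
  obtain ⟨hγ0, hγ1⟩ := hγ
  have hP' : P ∈ rowStochastic ℝ n := mem_rowStochastic_iff_sum.mpr hP
  have hbellman : (1 - γ • P) *ᵥ Vstar = r := by
    rw [hV, mulVec_mulVec, mul_nonsing_inv _ (isUnit_det_one_sub_smul hP' hγ0.le hγ1), one_mulVec]
  intro i
  have h := sq_smul_inv_one_sub_smul_mulVec_variance_le hP' hγ0.le hγ1
    (fun j => (hr j).1) (fun j => (hr j).2) hbellman i
  rw [div_mul_eq_div_div_swap, le_div_iff₀ (by positivity), mul_comm]
  have hvar : (fun j => ∑ s, P j s * Vstar s ^ 2 - (∑ s, P j s * Vstar s) ^ 2)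
      = P *ᵥ Vstar ^ 2 - (P *ᵥ Vstar) ^ 2 := rfl
  simpa [hvar] using h

theorem stmt13 {n : Type*} [Fintype n] [DecidableEq n]
    (γ : ℝ) (hγ : 0 < γ ∧ γ < 1)
    (P : Matrix n n ℝ) (hP : (∀ i j, 0 ≤ P i j) ∧ ∀ i, ∑ j, P i j = 1)
    (hdet : IsUnit ((1 : Matrix n n ℝ) - γ • P).det)
    (r : n → ℝ) (hr : ∀ i, 0 ≤ r i ∧ r i ≤ 1)
    (Vstar : n → ℝ) (hV : Vstar = ((1 : Matrix n n ℝ) - γ • P)⁻¹ *ᵥ r) :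
    ∀ i, (((1 : Matrix n n ℝ) - γ • P)⁻¹ *ᵥ
        (fun j => ∑ s, P j s * (Vstar s) ^ 2 - (∑ s, P j s * Vstar s) ^ 2)) i
      ≤ 2 / (γ ^ 2 * (1 - γ) ^ 2) :=
  stmt13_general γ hγ P hP r hr Vstar hV
end

section
/- Let X be a random variable with |X| ≤ 1/(1-γ) almost surely for some γ ∈ (0,1), and let B > 0, δ ∈ (0,1) satisfy P{|X| > B} ≤ δ and δ = ((1-γ)²/2) E[X²]. Then E[|X|] ≥ E[X²]/(4B). -/
/-!
On `{|X| ≤ B}` we have `X² ≤ B |X|`, while the contribution of the tail `{|X| > B}` to `E[X²]`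
is at most `(1 - γ)⁻² P{|X| > B} ≤ δ / (1 - γ)² = E[X²] / 2`. Hence
`E[X²] ≤ B E[|X|] + E[X²] / 2`.
-/

open MeasureTheory

section SecondMoment

variable {Ω : Type*} [MeasurableSpace Ω] {μ : Measure Ω} {X : Ω → ℝ}

lemma setIntegral_sq_le_mul_integral_abs (hX : Measurable X) (hint : Integrable X μ)
    {B : ℝ} (hB : 0 ≤ B) :
    ∫ ω in {ω | |X ω| ≤ B}, X ω ^ 2 ∂μ ≤ B * ∫ ω, |X ω| ∂μ := by
  have hS : MeasurableSet {ω | |X ω| ≤ B} := measurableSet_le hX.abs measurable_const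
  calc ∫ ω in {ω | |X ω| ≤ B}, X ω ^ 2 ∂μ
      ≤ ∫ ω in {ω | |X ω| ≤ B}, B * |X ω| ∂μ := by
        refine integral_mono_of_nonneg (ae_of_all _ fun ω => sq_nonneg _)
          (hint.abs.const_mul B).restrict (ae_restrict_of_forall_mem hS fun ω hω => ?_)
        show X ω ^ 2 ≤ B * |X ω|
        rw [← sq_abs, sq]
        exact mul_le_mul_of_nonneg_right hω (abs_nonneg _)
    _ = B * ∫ ω in {ω | |X ω| ≤ B}, |X ω| ∂μ := integral_const_mul _ _
    _ ≤ B * ∫ ω, |X ω| ∂μ :=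
        mul_le_mul_of_nonneg_left
          (setIntegral_le_integral hint.abs (ae_of_all _ fun ω => abs_nonneg _)) hB

lemma setIntegral_sq_le_of_ae_abs_le [IsFiniteMeasure μ] {M : ℝ}
    (hbdd : ∀ᵐ ω ∂μ, |X ω| ≤ M) (s : Set Ω) :
    ∫ ω in s, X ω ^ 2 ∂μ ≤ M ^ 2 * μ.real s := by
  calc ∫ ω in s, X ω ^ 2 ∂μ ≤ ∫ _ in s, M ^ 2 ∂μ := by
        refine integral_mono_of_nonneg (ae_of_all _ fun ω => sq_nonneg _) (integrable_const _)
          (ae_restrict_of_ae ?_)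
        filter_upwards [hbdd] with ω hω
        rw [← sq_abs]
        exact pow_le_pow_left₀ (abs_nonneg _) hω 2
    _ = M ^ 2 * μ.real s := by rw [setIntegral_const, smul_eq_mul, mul_comm]

lemma integral_sq_le_mul_integral_abs_add_tail [IsFiniteMeasure μ] (hX : Measurable X)
    {M B : ℝ} (hbdd : ∀ᵐ ω ∂μ, |X ω| ≤ M) (hB : 0 ≤ B) :
    ∫ ω, X ω ^ 2 ∂μ ≤ B * ∫ ω, |X ω| ∂μ + M ^ 2 * μ.real {ω | B < |X ω|} := by
  have hint : Integrable X μ :=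
    .of_bound hX.aestronglyMeasurable M (by simpa only [Real.norm_eq_abs] using hbdd)
  have hint2 : Integrable (fun ω => X ω ^ 2) μ := by
    refine .of_bound (hX.pow_const 2).aestronglyMeasurable (M ^ 2) ?_
    filter_upwards [hbdd] with ω hω
    rw [Real.norm_eq_abs, abs_pow]
    exact pow_le_pow_left₀ (abs_nonneg _) hω 2
  have hcompl : {ω | |X ω| ≤ B}ᶜ = {ω | B < |X ω|} := by ext; simp
  rw [← integral_add_compl (measurableSet_le hX.abs measurable_const) hint2, hcompl]
  exact add_le_add (setIntegral_sq_le_mul_integral_abs hX hint hB)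
    (setIntegral_sq_le_of_ae_abs_le hbdd _)

end SecondMoment

theorem stmt18_general {Ω : Type*} [MeasurableSpace Ω] (μ : Measure Ω)
    [IsProbabilityMeasure μ] (γ B δ : ℝ) (hγ : 0 < γ ∧ γ < 1) (hB : 0 < B)
    (X : Ω → ℝ) (hX : Measurable X)
    (hbdd : ∀ᵐ ω ∂μ, |X ω| ≤ 1 / (1 - γ))
    (htail : (μ {ω | B < |X ω|}).toReal ≤ δ)
    (hδeq : δ = (1 - γ) ^ 2 / 2 * ∫ ω, (X ω) ^ 2 ∂μ) :
    (∫ ω, (X ω) ^ 2 ∂μ) / (4 * B) ≤ ∫ ω, |X ω| ∂μ := by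
  have hγ1 : 0 < 1 - γ := by linarith [hγ.2]
  have htail_sq : (1 / (1 - γ)) ^ 2 * μ.real {ω | B < |X ω|} ≤ (∫ ω, X ω ^ 2 ∂μ) / 2 := by
    calc (1 / (1 - γ)) ^ 2 * μ.real {ω | B < |X ω|} ≤ (1 / (1 - γ)) ^ 2 * δ := by
          gcongr; exact htail
      _ = (∫ ω, X ω ^ 2 ∂μ) / 2 := by rw [hδeq]; field_simp
  have hmoment := integral_sq_le_mul_integral_abs_add_tail hX hbdd hB.le
  have habs : 0 ≤ ∫ ω, |X ω| ∂μ := integral_nonneg fun ω => abs_nonneg _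
  rw [div_le_iff₀ (by positivity)]
  linarith [mul_nonneg hB.le habs]

theorem stmt18 {Ω : Type*} [MeasurableSpace Ω] (μ : Measure Ω)
    [IsProbabilityMeasure μ] (γ B δ : ℝ) (hγ : 0 < γ ∧ γ < 1) (hB : 0 < B)
    (hδ : 0 < δ ∧ δ < 1)
    (X : Ω → ℝ) (hX : Measurable X)
    (hbdd : ∀ᵐ ω ∂μ, |X ω| ≤ 1 / (1 - γ))
    (htail : (μ {ω | B < |X ω|}).toReal ≤ δ)
    (hδeq : δ = (1 - γ) ^ 2 / 2 * ∫ ω, (X ω) ^ 2 ∂μ) :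
    (∫ ω, (X ω) ^ 2 ∂μ) / (4 * B) ≤ ∫ ω, |X ω| ∂μ :=
  stmt18_general μ γ B δ hγ hB X hX hbdd htail hδeq
end

section
/- Suppose Y_n = ∑_{k=1}^n X_k where {X_k} is a real-valued martingale difference sequence with |X_k| ≤ R for all k, and define W_n = ∑_{k=1}^n E[X_k² | X_1,...,X_{k-1}]. If W_n ≤ σ² holds deterministically, then for any positive integer K ≥ 1, with probability at least 1 - δ, |Y_n| ≤ √(8 max{W_n, σ²/2^K} log(2K/δ)) + (4/3) R log(2K/δ). -/
/-!
For `|λ| R ≤ 1` the process `exp (λ Y_n - λ² W_n)` is a supermartingale: conditionally on the past,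
`E e^{λX} ≤ 1 + λ² E X² ≤ e^{λ² E X²}` because `e^u ≤ 1 + u + u²` for `|u| ≤ 1` and `E X = 0`.
Markov's inequality for `±λ`, with `λ` optimized, gives Freedman's bound
`P(|Y_n| > √(4sL) + 4RL/3, W_n ≤ s) ≤ 2e^{-L}`. Since `W_n ≤ σ²`, some level `s = σ²/2^j` with
`j < K` satisfies `W_n ≤ s ≤ 2 max W_n (σ²/2^K)`; a union bound over these `K` levels with
`L = log (2K/δ)` gives total failure probability `δ`.
-/

open MeasureTheory ProbabilityTheory

lemma Real.exp_le_one_add_add_sq {u : ℝ} (h : |u| ≤ 1) : Real.exp u ≤ 1 + u + u ^ 2 := by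
  linarith [(abs_le.1 (Real.abs_exp_sub_one_sub_id_le h)).2]

section OneStep

variable {Ω : Type*} {m m0 : MeasurableSpace Ω} {μ : Measure Ω} [IsFiniteMeasure μ]
  {ξ : Ω → ℝ} {R l : ℝ}

lemma integrable_of_abs_le (hξ : AEStronglyMeasurable ξ μ) (hbdd : ∀ᵐ ω ∂μ, |ξ ω| ≤ R) :
    Integrable ξ μ :=
  Integrable.of_bound hξ R (by simpa only [Real.norm_eq_abs] using hbdd)

lemma abs_mul_le_one_of_abs_le {x : ℝ} (hx : |x| ≤ R) (hl : |l| * R ≤ 1) : |l * x| ≤ 1 := by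
  rw [abs_mul]; exact (mul_le_mul_of_nonneg_left hx (abs_nonneg l)).trans hl

lemma integrable_exp_mul_of_abs_le (hξ : AEStronglyMeasurable ξ μ)
    (hbdd : ∀ᵐ ω ∂μ, |ξ ω| ≤ R) (hl : |l| * R ≤ 1) :
    Integrable (fun ω => Real.exp (l * ξ ω)) μ := by
  refine integrable_of_abs_le (Real.continuous_exp.comp_aestronglyMeasurable (hξ.const_mul l))
    (R := Real.exp 1) ?_
  filter_upwards [hbdd] with ω hω
  rw [Real.abs_exp, Real.exp_le_exp]
  exact (le_abs_self _).trans (abs_mul_le_one_of_abs_le hω hl)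

lemma condExp_exp_mul_le (hm : m ≤ m0) (hξ : AEStronglyMeasurable ξ μ)
    (hbdd : ∀ᵐ ω ∂μ, |ξ ω| ≤ R) (hl : |l| * R ≤ 1) (hξ0 : μ[ξ | m] =ᵐ[μ] 0) :
    μ[fun ω => Real.exp (l * ξ ω) | m] ≤ᵐ[μ]
      fun ω => Real.exp (l ^ 2 * μ[fun ω => ξ ω ^ 2 | m] ω) := by
  have hξint : Integrable ξ μ := integrable_of_abs_le hξ hbdd
  have hsqint : Integrable (fun ω => ξ ω ^ 2) μ :=
    integrable_of_abs_le (hξ.pow 2) (R := R ^ 2) <| by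
      filter_upwards [hbdd] with ω hω
      rw [abs_pow]
      exact pow_le_pow_left₀ (abs_nonneg _) hω 2
  have hquad : (fun ω => Real.exp (l * ξ ω)) ≤ᵐ[μ]
      (fun _ => (1 : ℝ)) + (l • ξ + l ^ 2 • fun ω => ξ ω ^ 2) := by
    filter_upwards [hbdd] with ω hω
    simpa only [Pi.add_apply, Pi.smul_apply, smul_eq_mul, mul_pow, ← add_assoc]
      using Real.exp_le_one_add_add_sq (abs_mul_le_one_of_abs_le hω hl)
  have hlin := (integrable_const (1 : ℝ)).add ((hξint.smul l).add (hsqint.smul (l ^ 2)))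
  filter_upwards [condExp_mono (m := m) (integrable_exp_mul_of_abs_le hξ hbdd hl) hlin hquad,
    condExp_add (integrable_const (1 : ℝ)) ((hξint.smul l).add (hsqint.smul (l ^ 2))) m,
    condExp_add (hξint.smul l) (hsqint.smul (l ^ 2)) m, condExp_smul l ξ m,
    condExp_smul (l ^ 2) (fun ω => ξ ω ^ 2) m, hξ0] with ω h1 h2 h3 h4 h5 h6
  rw [h2, Pi.add_apply, h3, condExp_const hm] at h1
  simp only [Pi.add_apply, h4, h5, Pi.smul_apply, h6, Pi.zero_apply, smul_eq_mul,
    mul_zero] at h1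
  exact h1.trans (by linarith [Real.add_one_le_exp (l ^ 2 * μ[fun ω => ξ ω ^ 2 | m] ω)])

end OneStep

section ExpSupermartingale

variable {Ω : Type*} {m0 : MeasurableSpace Ω} (μ : Measure Ω) (ℱ : Filtration ℕ m0)
  (X : ℕ → Ω → ℝ)

noncomputable def partialSum (n : ℕ) (ω : Ω) : ℝ := ∑ k ∈ Finset.Icc 1 n, X k ω

noncomputable def predictableQuadVar (n : ℕ) (ω : Ω) : ℝ :=
  ∑ k ∈ Finset.Icc 1 n, (μ[fun ω' => X k ω' ^ 2 | ℱ (k - 1)]) ω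

noncomputable def expProcess (l : ℝ) (n : ℕ) (ω : Ω) : ℝ :=
  Real.exp (l * partialSum X n ω - l ^ 2 * predictableQuadVar μ ℱ X n ω)

variable {μ ℱ X} {R l : ℝ}

lemma stronglyAdapted_partialSum (hadapt : ∀ k, StronglyMeasurable[ℱ k] (X k)) :
    StronglyAdapted ℱ (partialSum X) := fun _ =>
  Finset.stronglyMeasurable_fun_sum _ fun k hk =>
    (hadapt k).mono (ℱ.mono (Finset.mem_Icc.1 hk).2)

lemma stronglyAdapted_predictableQuadVar : StronglyAdapted ℱ (predictableQuadVar μ ℱ X) := fun _ =>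
  Finset.stronglyMeasurable_fun_sum _ fun k hk =>
    stronglyMeasurable_condExp.mono (ℱ.mono ((Nat.sub_le k 1).trans (Finset.mem_Icc.1 hk).2))

lemma stronglyAdapted_expProcess (hadapt : ∀ k, StronglyMeasurable[ℱ k] (X k)) :
    StronglyAdapted ℱ (expProcess μ ℱ X l) := fun n =>
  Real.continuous_exp.comp_stronglyMeasurable
    ((stronglyMeasurable_const.mul (stronglyAdapted_partialSum hadapt n)).sub
      (stronglyMeasurable_const.mul (stronglyAdapted_predictableQuadVar n)))

lemma predictableQuadVar_nonneg (n : ℕ) : 0 ≤ᵐ[μ] predictableQuadVar μ ℱ X n := by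
  have hC : ∀ᵐ ω ∂μ, ∀ k, 0 ≤ (μ[fun ω' => X k ω' ^ 2 | ℱ (k - 1)]) ω :=
    ae_all_iff.2 fun k => condExp_nonneg (Filter.Eventually.of_forall fun ω => sq_nonneg _)
  filter_upwards [hC] with ω hω
  exact Finset.sum_nonneg fun k _ => hω k

lemma expProcess_pos (n : ℕ) (ω : Ω) : 0 < expProcess μ ℱ X l n ω := Real.exp_pos _

lemma expProcess_le_exp (hbdd : ∀ k, ∀ᵐ ω ∂μ, |X k ω| ≤ R) (hl : |l| * R ≤ 1) (n : ℕ) :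
    ∀ᵐ ω ∂μ, expProcess μ ℱ X l n ω ≤ Real.exp n := by
  filter_upwards [ae_all_iff.2 hbdd, predictableQuadVar_nonneg n] with ω hX hV
  have hS : l * partialSum X n ω ≤ n := by
    calc l * partialSum X n ω = ∑ k ∈ Finset.Icc 1 n, l * X k ω := Finset.mul_sum _ _ _
      _ ≤ ∑ _k ∈ Finset.Icc 1 n, (1 : ℝ) := Finset.sum_le_sum fun k _ =>
          (le_abs_self _).trans (abs_mul_le_one_of_abs_le (hX k) hl)
      _ = n := by simp
  have hV : 0 ≤ predictableQuadVar μ ℱ X n ω := hV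
  exact Real.exp_le_exp.2 (by nlinarith [mul_nonneg (sq_nonneg l) hV])

lemma integrable_expProcess [IsFiniteMeasure μ] (hadapt : ∀ k, StronglyMeasurable[ℱ k] (X k))
    (hbdd : ∀ k, ∀ᵐ ω ∂μ, |X k ω| ≤ R) (hl : |l| * R ≤ 1) (n : ℕ) :
    Integrable (expProcess μ ℱ X l n) μ := by
  refine integrable_of_abs_le (R := Real.exp n)
    ((stronglyAdapted_expProcess hadapt n).mono (ℱ.le n)).aestronglyMeasurable ?_
  filter_upwards [expProcess_le_exp (ℱ := ℱ) hbdd hl n] with ω hω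
  rwa [abs_of_pos (expProcess_pos n ω)]

lemma expProcess_succ (n : ℕ) (ω : Ω) :
    expProcess μ ℱ X l (n + 1) ω =
      expProcess μ ℱ X l n ω * Real.exp (-(l ^ 2 * μ[fun ω' => X (n + 1) ω' ^ 2 | ℱ n] ω)) *
        Real.exp (l * X (n + 1) ω) := by
  simp only [expProcess, partialSum, predictableQuadVar, ← Real.exp_add,
    Finset.sum_Icc_succ_top (Nat.le_add_left 1 n), Nat.add_sub_cancel]
  ring_nf

theorem supermartingale_expProcess [IsFiniteMeasure μ]
    (hadapt : ∀ k, StronglyMeasurable[ℱ k] (X k)) (hbdd : ∀ k, ∀ᵐ ω ∂μ, |X k ω| ≤ R)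
    (hmds : ∀ k, 1 ≤ k → μ[X k | ℱ (k - 1)] =ᵐ[μ] 0) (hl : |l| * R ≤ 1) :
    Supermartingale (expProcess μ ℱ X l) ℱ μ := by
  refine supermartingale_nat (stronglyAdapted_expProcess hadapt)
    (integrable_expProcess hadapt hbdd hl) fun n => ?_
  set G : Ω → ℝ := fun ω =>
    expProcess μ ℱ X l n ω * Real.exp (-(l ^ 2 * μ[fun ω' => X (n + 1) ω' ^ 2 | ℱ n] ω))
  have hX : StronglyMeasurable (X (n + 1)) := (hadapt (n + 1)).mono (ℱ.le (n + 1))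
  have hG : StronglyMeasurable[ℱ n] G :=
    (stronglyAdapted_expProcess hadapt n).mul
      (Real.continuous_exp.comp_stronglyMeasurable (stronglyMeasurable_condExp.const_mul _).neg)
  have hsplit : expProcess μ ℱ X l (n + 1) = G * fun ω => Real.exp (l * X (n + 1) ω) :=
    funext (expProcess_succ n)
  have hstep := condExp_exp_mul_le (ℱ.le n) hX.aestronglyMeasurable (hbdd (n + 1)) hl
    (by simpa using hmds (n + 1) (Nat.le_add_left 1 n))
  rw [hsplit]
  filter_upwards [condExp_mul_of_stronglyMeasurable_left hG
    (hsplit ▸ integrable_expProcess hadapt hbdd hl (n + 1))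
    (integrable_exp_mul_of_abs_le hX.aestronglyMeasurable (hbdd (n + 1)) hl), hstep] with ω h1 h2
  rw [h1, Pi.mul_apply]
  calc G ω * μ[fun ω => Real.exp (l * X (n + 1) ω) | ℱ n] ω
      ≤ G ω * Real.exp (l ^ 2 * μ[fun ω' => X (n + 1) ω' ^ 2 | ℱ n] ω) :=
        mul_le_mul_of_nonneg_left h2 (mul_pos (expProcess_pos n ω) (Real.exp_pos _)).le
    _ = expProcess μ ℱ X l n ω := by
        simp only [G, mul_assoc, ← Real.exp_add, neg_add_cancel, Real.exp_zero, mul_one]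

lemma integral_expProcess_le_one [IsProbabilityMeasure μ]
    (hadapt : ∀ k, StronglyMeasurable[ℱ k] (X k)) (hbdd : ∀ k, ∀ᵐ ω ∂μ, |X k ω| ≤ R)
    (hmds : ∀ k, 1 ≤ k → μ[X k | ℱ (k - 1)] =ᵐ[μ] 0) (hl : |l| * R ≤ 1) (n : ℕ) :
    ∫ ω, expProcess μ ℱ X l n ω ∂μ ≤ 1 := by
  have h := (supermartingale_expProcess hadapt hbdd hmds hl).setIntegral_le (Nat.zero_le n)
    MeasurableSet.univ
  simpa [expProcess, partialSum, predictableQuadVar] using h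

end ExpSupermartingale

section Tail

variable {Ω : Type*} {m0 : MeasurableSpace Ω} {μ : Measure Ω} [IsProbabilityMeasure μ]
  {ℱ : Filtration ℕ m0} {X : ℕ → Ω → ℝ} {R : ℝ}

lemma measureReal_le_mul_partialSum_and_le (hadapt : ∀ k, StronglyMeasurable[ℱ k] (X k))
    (hbdd : ∀ k, ∀ᵐ ω ∂μ, |X k ω| ≤ R) (hmds : ∀ k, 1 ≤ k → μ[X k | ℱ (k - 1)] =ᵐ[μ] 0)
    {l : ℝ} (hl : |l| * R ≤ 1) (n : ℕ) (τ s : ℝ) :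
    μ.real {ω | τ ≤ l * partialSum X n ω ∧ predictableQuadVar μ ℱ X n ω ≤ s} ≤
      Real.exp (l ^ 2 * s - τ) := by
  have hsub : {ω | τ ≤ l * partialSum X n ω ∧ predictableQuadVar μ ℱ X n ω ≤ s} ⊆
      {ω | Real.exp (τ - l ^ 2 * s) ≤ expProcess μ ℱ X l n ω} := fun ω ⟨h1, h2⟩ =>
    Real.exp_le_exp.2 (by nlinarith [mul_le_mul_of_nonneg_left h2 (sq_nonneg l)])
  have hmarkov := mul_meas_ge_le_integral_of_nonneg
    (Filter.Eventually.of_forall fun ω => (expProcess_pos n ω).le)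
    (integrable_expProcess hadapt hbdd hl n) (Real.exp (τ - l ^ 2 * s))
  calc μ.real {ω | τ ≤ l * partialSum X n ω ∧ predictableQuadVar μ ℱ X n ω ≤ s}
      ≤ μ.real {ω | Real.exp (τ - l ^ 2 * s) ≤ expProcess μ ℱ X l n ω} := measureReal_mono hsub
    _ ≤ Real.exp (l ^ 2 * s - τ) := by
        have h := hmarkov.trans (integral_expProcess_le_one hadapt hbdd hmds hl n)
        rwa [← le_div_iff₀' (Real.exp_pos _), one_div, ← Real.exp_neg, neg_sub] at h

/-- The witness is `λ = min (2L/τ) (1/R)` with `τ = √(4sL) + 4RL/3`. -/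
lemma exists_bernstein_parameter {R L s : ℝ} (hR : 0 < R) (hL : 0 < L) (hs : 0 ≤ s) :
    ∃ l, 0 < l ∧ l * R ≤ 1 ∧
      l ^ 2 * s - l * (Real.sqrt (4 * s * L) + 4 / 3 * R * L) ≤ -L := by
  set τ := Real.sqrt (4 * s * L) + 4 / 3 * R * L with hτdef
  have hroot : Real.sqrt (4 * s * L) ^ 2 = 4 * s * L := Real.sq_sqrt (by positivity)
  have hRL : 0 < 4 / 3 * R * L := by positivity
  have hτ : 0 < τ := by positivity
  rcases le_total (2 * L / τ) (1 / R) with hle | hle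
  · refine ⟨2 * L / τ, by positivity, by rwa [le_div_iff₀ hR] at hle, ?_⟩
    have hsτ : 4 * s * L ≤ τ ^ 2 := hroot ▸
      pow_le_pow_left₀ (Real.sqrt_nonneg _) (by rw [hτdef]; linarith) 2
    have : (2 * L / τ) ^ 2 * s ≤ L := by
      rw [div_pow, div_mul_eq_mul_div, div_le_iff₀ (by positivity)]
      nlinarith
    have : 2 * L / τ * τ = 2 * L := div_mul_cancel₀ _ hτ.ne'
    linarith
  · refine ⟨1 / R, by positivity, by rw [one_div_mul_cancel hR.ne'], ?_⟩
    have hτR : τ ≤ 2 * L * R := by rwa [div_le_div_iff₀ hR hτ, one_mul] at hle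
    have hsR : 4 * s * L ≤ (2 / 3 * L * R) ^ 2 := hroot ▸
      pow_le_pow_left₀ (Real.sqrt_nonneg _) (by rw [hτdef] at hτR; linarith) 2
    have h1 : (1 / R) ^ 2 * s ≤ L / 9 := by
      rw [div_pow, one_pow, div_mul_eq_mul_div, one_mul, div_le_iff₀ (by positivity)]
      nlinarith
    have h2 : 4 / 3 * L ≤ 1 / R * τ := by
      have : 1 / R * (4 / 3 * R * L) = 4 / 3 * L := by field_simp
      rw [hτdef, mul_add, this]
      linarith [mul_nonneg (one_div_pos.2 hR).le (Real.sqrt_nonneg (4 * s * L))]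
    linarith

/-- Freedman's inequality. -/
theorem measureReal_lt_abs_partialSum_and_le (hadapt : ∀ k, StronglyMeasurable[ℱ k] (X k))
    (hbdd : ∀ k, ∀ᵐ ω ∂μ, |X k ω| ≤ R) (hmds : ∀ k, 1 ≤ k → μ[X k | ℱ (k - 1)] =ᵐ[μ] 0)
    (hR : 0 ≤ R) {L s : ℝ} (hL : 0 < L) (hs : 0 ≤ s) (n : ℕ) :
    μ.real {ω | Real.sqrt (4 * s * L) + 4 / 3 * R * L < |partialSum X n ω| ∧
      predictableQuadVar μ ℱ X n ω ≤ s} ≤ 2 * Real.exp (-L) := by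
  set τ := Real.sqrt (4 * s * L) + 4 / 3 * R * L with hτdef
  rcases hR.eq_or_lt with rfl | hR
  · have hnull : μ.real {ω | τ < |partialSum X n ω| ∧ predictableQuadVar μ ℱ X n ω ≤ s} = 0 := by
      rw [measureReal_def, measure_eq_zero_iff_ae_notMem.2, ENNReal.toReal_zero]
      filter_upwards [ae_all_iff.2 hbdd] with ω hX hω
      have hY : partialSum X n ω = 0 :=
        Finset.sum_eq_zero fun k _ => abs_nonpos_iff.1 (hX k)
      have : 0 ≤ τ := by positivity
      simp only [hY, abs_zero] at hω
      linarith [hω.1]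
    rw [hnull]
    positivity
  obtain ⟨l, hl0, hlR, hlL⟩ := exists_bernstein_parameter hR hL hs
  rw [← hτdef] at hlL
  have htail (l' : ℝ) (hl' : |l'| = l) :
      μ.real {ω | l * τ ≤ l' * partialSum X n ω ∧ predictableQuadVar μ ℱ X n ω ≤ s} ≤
        Real.exp (-L) := by
    refine (measureReal_le_mul_partialSum_and_le hadapt hbdd hmds (by rwa [hl']) n _ s).trans ?_
    rw [Real.exp_le_exp, ← sq_abs, hl']
    linarith
  have hsub : {ω | τ < |partialSum X n ω| ∧ predictableQuadVar μ ℱ X n ω ≤ s} ⊆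
      {ω | l * τ ≤ l * partialSum X n ω ∧ predictableQuadVar μ ℱ X n ω ≤ s} ∪
        {ω | l * τ ≤ -l * partialSum X n ω ∧ predictableQuadVar μ ℱ X n ω ≤ s} := by
    rintro ω ⟨h1, h2⟩
    rcases le_total 0 (partialSum X n ω) with hY | hY
    · rw [abs_of_nonneg hY] at h1
      exact Or.inl ⟨by nlinarith, h2⟩
    · rw [abs_of_nonpos hY] at h1
      exact Or.inr ⟨by nlinarith, h2⟩
  calc _ ≤ _ := measureReal_mono hsub
    _ ≤ _ := measureReal_union_le _ _
    _ ≤ Real.exp (-L) + Real.exp (-L) :=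
        add_le_add (htail l (abs_of_pos hl0)) (htail (-l) (by rw [abs_neg, abs_of_pos hl0]))
    _ = 2 * Real.exp (-L) := by ring

end Tail

lemma exists_dyadic_level {w σ2 : ℝ} (hw : w ≤ σ2) {K : ℕ} (hK : 1 ≤ K) :
    ∃ j < K, w ≤ σ2 / 2 ^ j ∧ σ2 / 2 ^ (j + 1) ≤ max w (σ2 / 2 ^ K) := by
  classical
  set j := Nat.findGreatest (fun j => w ≤ σ2 / 2 ^ j) (K - 1)
  have hj : w ≤ σ2 / 2 ^ j := Nat.findGreatest_spec (P := fun j => w ≤ σ2 / 2 ^ j)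
    (Nat.zero_le _) (by simpa using hw)
  have hjK : j ≤ K - 1 := Nat.findGreatest_le _
  refine ⟨j, by omega, hj, ?_⟩
  rcases hjK.eq_or_lt with hjK | hjK
  · rw [hjK, Nat.sub_add_cancel hK]
    exact le_max_right _ _
  · exact le_max_of_le_left (not_le.1 (Nat.findGreatest_is_greatest
      (P := fun j => w ≤ σ2 / 2 ^ j) (Nat.lt_succ_self j) hjK)).le

lemma exists_dyadic_level_lt_abs {y w σ2 L c : ℝ} (hL : 0 ≤ L) (hw : w ≤ σ2) {K : ℕ}
    (hK : 1 ≤ K) (hy : Real.sqrt (8 * max w (σ2 / 2 ^ K) * L) + c < |y|) :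
    ∃ j < K, Real.sqrt (4 * (σ2 / 2 ^ j) * L) + c < |y| ∧ w ≤ σ2 / 2 ^ j := by
  obtain ⟨j, hjK, hwj, hj⟩ := exists_dyadic_level hw hK
  refine ⟨j, hjK, lt_of_le_of_lt ?_ hy, hwj⟩
  have : 4 * (σ2 / 2 ^ j) = 8 * (σ2 / 2 ^ (j + 1)) := by rw [pow_succ]; ring
  refine add_le_add_left (Real.sqrt_le_sqrt ?_) c
  rw [this]
  gcongr

lemma one_sub_le_measureReal_of_measureReal_compl_le {Ω : Type*} {m0 : MeasurableSpace Ω}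
    {μ : Measure Ω} [IsProbabilityMeasure μ] {s : Set Ω} {δ : ℝ} (h : μ.real sᶜ ≤ δ) :
    1 - δ ≤ μ.real s := by
  have := ENNReal.toReal_mono (by finiteness) (measure_univ_le_add_compl (μ := μ) s)
  rw [measure_univ, ENNReal.toReal_add (by finiteness) (by finiteness)] at this
  simp only [ENNReal.toReal_one] at this
  rw [measureReal_def] at h ⊢
  linarith

theorem stmt19_general {Ω : Type*} {m0 : MeasurableSpace Ω} (μ : Measure Ω)
    [IsProbabilityMeasure μ] (ℱ : Filtration ℕ m0)
    (X : ℕ → Ω → ℝ) (n : ℕ) (R σ2 : ℝ) (hσ2 : 0 ≤ σ2)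
    (K : ℕ) (hK : 1 ≤ K) (δ : ℝ) (hδ : 0 < δ ∧ δ < 1)
    (hadapt : ∀ k, StronglyMeasurable[ℱ k] (X k))
    (hbdd : ∀ k, ∀ᵐ ω ∂μ, |X k ω| ≤ R)
    (hmds : ∀ k, 1 ≤ k → μ[X k | ℱ (k - 1)] =ᵐ[μ] 0)
    (hW : ∀ᵐ ω ∂μ,
      ∑ k ∈ Finset.Icc 1 n, (μ[fun ω' => (X k ω') ^ 2 | ℱ (k - 1)]) ω ≤ σ2) :
    1 - δ ≤ (μ {ω | |∑ k ∈ Finset.Icc 1 n, X k ω| ≤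
        Real.sqrt (8 * max (∑ k ∈ Finset.Icc 1 n, (μ[fun ω' => (X k ω') ^ 2 | ℱ (k - 1)]) ω)
            (σ2 / 2 ^ K) * Real.log (2 * K / δ))
          + 4 / 3 * R * Real.log (2 * K / δ)}).toReal := by
  obtain ⟨hδ0, hδ1⟩ := hδ
  have hK0 : (0 : ℝ) < K := by exact_mod_cast hK
  set L := Real.log (2 * K / δ)
  have hL : 0 < L :=
    Real.log_pos (by rw [lt_div_iff₀ hδ0]; linarith [(Nat.one_le_cast.2 hK : (1 : ℝ) ≤ K)])
  have hexpL : 2 * Real.exp (-L) = δ / K := by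
    rw [Real.exp_neg, Real.exp_log (by positivity)]
    field_simp
  have hR : 0 ≤ R := by
    obtain ⟨ω, hω⟩ := (hbdd 0).exists
    exact (abs_nonneg _).trans hω
  set B : ℕ → Set Ω := fun j => {ω |
    Real.sqrt (4 * (σ2 / 2 ^ j) * L) + 4 / 3 * R * L < |partialSum X n ω| ∧
      predictableQuadVar μ ℱ X n ω ≤ σ2 / 2 ^ j}
  refine one_sub_le_measureReal_of_measureReal_compl_le ?_
  calc _ ≤ μ.real (⋃ j ∈ Finset.range K, B j) := by
        refine ENNReal.toReal_mono (measure_ne_top μ _) (measure_mono_ae ?_)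
        filter_upwards [hW] with ω hWω hω
        obtain ⟨j, hjK, hj⟩ := exists_dyadic_level_lt_abs hL.le hWω hK (not_le.1 hω)
        exact Set.mem_biUnion (Finset.mem_range.2 hjK) hj
    _ ≤ ∑ j ∈ Finset.range K, μ.real (B j) := measureReal_biUnion_finset_le _ _
    _ ≤ ∑ _j ∈ Finset.range K, δ / K := Finset.sum_le_sum fun j _ => hexpL ▸
        measureReal_lt_abs_partialSum_and_le hadapt hbdd hmds hR hL (by positivity) n
    _ = δ := by rw [Finset.sum_const, Finset.card_range, nsmul_eq_mul]; field_simp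

theorem stmt19 {Ω : Type*} {m0 : MeasurableSpace Ω} (μ : Measure Ω)
    [IsProbabilityMeasure μ] (ℱ : Filtration ℕ m0)
    (X : ℕ → Ω → ℝ) (n : ℕ) (R σ2 : ℝ) (hσ2 : 0 ≤ σ2)
    (K : ℕ) (hK : 1 ≤ K) (δ : ℝ) (hδ : 0 < δ ∧ δ < 1)
    (hadapt : ∀ k, StronglyMeasurable[ℱ k] (X k))
    (hint : ∀ k, MemLp (X k) 2 μ)
    (hbdd : ∀ k, ∀ᵐ ω ∂μ, |X k ω| ≤ R)
    (hmds : ∀ k, 1 ≤ k → μ[X k | ℱ (k - 1)] =ᵐ[μ] 0)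
    (hW : ∀ᵐ ω ∂μ,
      ∑ k ∈ Finset.Icc 1 n, (μ[fun ω' => (X k ω') ^ 2 | ℱ (k - 1)]) ω ≤ σ2) :
    1 - δ ≤ (μ {ω | |∑ k ∈ Finset.Icc 1 n, X k ω| ≤
        Real.sqrt (8 * max (∑ k ∈ Finset.Icc 1 n, (μ[fun ω' => (X k ω') ^ 2 | ℱ (k - 1)]) ω)
            (σ2 / 2 ^ K) * Real.log (2 * K / δ))
          + 4 / 3 * R * Real.log (2 * K / δ)}).toReal :=
  stmt19_general μ ℱ X n R σ2 hσ2 K hK δ hδ hadapt hbdd hmds hW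
end
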